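/- If f : ℂ → ℂ is entire, not identically zero, satisfies f(z+1)=f(z) and f(z+τ)=(−1)^n e^{−2πi(nz−c)} f(z) (Im τ > 0, n ≥ 1), and z₁,…,z_n are its zeros in a fundamental parallelogram counted with multiplicity, then z₁ + ⋯ + z_n ≡ c (mod ℤ + ℤτ). -/

import Mathlib

/-!
Instead of integrating `z f'(z) / f(z)`, divide by a theta function with the same zeros.
`ϑ(z) := jacobiTheta₂ (z + (1 - τ) / 2) τ` is a nonzero entire function in `Θ_{1,0}(τ)` vanishing
at `0`. With `m u` the order of `f` at `u`, the product `G(z) = ∏_{u ∈ Z} ϑ(z - u) ^ m u` lies in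
`Θ_{n,S}(τ)` for `S = ∑ m u * u` and vanishes to order at least `m u` along `u + ℤ + ℤτ`; by
quasi-periodicity these cosets carry all zeros of `f`, each with order `m u`. So `h = G / f` is a
nonzero entire function with `h(z + 1) = h(z)` and `h(z + τ) = e^{2πiν} h(z)`, where `ν = S - c`.
For `β = Im ν / Im τ` the modulus of `h(z) e^{-2πiβz}` is doubly periodic, so by Liouville this
function is constant, and comparing the two multipliers gives `ν ∈ ℤ + ℤτ`.
-/

open Complex Filter Topology Function MeasureTheory

/-- The open fundamental parallelogram `{z₀ + s + tτ : 0 ≤ s,t < 1}` for the lattice `ℤ + ℤτ`. -/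
def fundPar (τ z₀ : ℂ) : Set ℂ :=
  {z | ∃ s t : ℝ, 0 ≤ s ∧ s < 1 ∧ 0 ≤ t ∧ t < 1 ∧ z = z₀ + s + t * τ}

lemma exists_mem_fundPar_add {τ : ℂ} (hτ : 0 < τ.im) (z₀ z : ℂ) :
    ∃ w ∈ fundPar τ z₀, ∃ a b : ℤ, z = w + (a + b * τ) := by
  set t : ℝ := (z - z₀).im / τ.im
  set s : ℝ := (z - z₀).re - t * τ.re
  have hst : z = z₀ + s + t * τ := by
    apply Complex.ext
    · simp only [s, t, add_re, ofReal_re, mul_re, ofReal_im, zero_mul, sub_zero, sub_re]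
      ring
    · simp [s, t, div_mul_cancel₀ _ hτ.ne']
  refine ⟨z₀ + Int.fract s + Int.fract t * τ, ⟨_, _, Int.fract_nonneg s, Int.fract_lt_one s,
    Int.fract_nonneg t, Int.fract_lt_one t, rfl⟩, ⌊s⌋, ⌊t⌋, ?_⟩
  have hs := congrArg ofReal (Int.floor_add_fract s)
  have ht := congrArg ofReal (Int.floor_add_fract t)
  push_cast at hs ht
  linear_combination hst - hs - τ * ht

lemma isBounded_fundPar (τ z₀ : ℂ) : Bornology.IsBounded (fundPar τ z₀) := by
  have hK : IsCompact (Set.Icc (0 : ℝ) 1 ×ˢ Set.Icc (0 : ℝ) 1) := isCompact_Icc.prod isCompact_Icc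
  refine (hK.image (f := fun p : ℝ × ℝ => z₀ + p.1 + p.2 * τ) (by fun_prop)).isBounded.subset ?_
  rintro _ ⟨s, t, hs0, hs1, ht0, ht1, rfl⟩
  exact ⟨(s, t), ⟨⟨hs0, hs1.le⟩, ⟨ht0, ht1.le⟩⟩, rfl⟩

lemma Differentiable.apply_eq_apply_of_periodic_norm {τ : ℂ} (hτ : 0 < τ.im) {k : ℂ → ℂ}
    (hk : Differentiable ℂ k) (h1 : Periodic (‖k ·‖) 1) (hτk : Periodic (‖k ·‖) τ) (z w : ℂ) :
    k z = k w := by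
  obtain ⟨C, hC⟩ := (isBounded_fundPar τ 0).isCompact_closure.exists_bound_of_continuousOn
    hk.continuous.continuousOn
  refine hk.apply_eq_apply_of_bounded (isBounded_iff_forall_norm_le.mpr ⟨C, ?_⟩) z w
  rintro _ ⟨x, rfl⟩
  obtain ⟨y, hy, a, b, rfl⟩ := exists_mem_fundPar_add hτ 0 x
  have hlat : Periodic (‖k ·‖) (a + b * τ) := by
    simpa using (h1.int_mul a).add_period (hτk.int_mul b)
  exact (hlat y).le.trans (hC y (subset_closure hy))

lemma analyticOrderAt_finset_prod {𝕜 ι : Type*} [NontriviallyNormedField 𝕜] (s : Finset ι)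
    {f : ι → 𝕜 → 𝕜} {z : 𝕜} (hf : ∀ i ∈ s, AnalyticAt 𝕜 (f i) z) :
    analyticOrderAt (∏ i ∈ s, f i) z = ∑ i ∈ s, analyticOrderAt (f i) z := by
  classical
  induction s using Finset.induction_on with
  | empty => simp [analyticOrderAt_eq_zero]
  | insert i s hi ih =>
    have hs : ∀ j ∈ s, AnalyticAt 𝕜 (f j) z := fun j hj => hf j (Finset.mem_insert_of_mem hj)
    rw [Finset.prod_insert hi, Finset.sum_insert hi,
      analyticOrderAt_mul (hf i (s.mem_insert_self i)) (Finset.analyticAt_prod s hs), ih hs]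

lemma analyticOrderAt_comp_add_const (g : ℂ → ℂ) (a w : ℂ) :
    analyticOrderAt (fun z => g (z + a)) w = analyticOrderAt g (w + a) :=
  analyticOrderAt_comp_of_deriv_ne_zero (g := fun z => z + a) (by fun_prop) (by simp)

lemma periodic_analyticOrderAt_of_add_eq_mul {f u : ℂ → ℂ} {ω : ℂ} (hf : Differentiable ℂ f)
    (hu : Differentiable ℂ u) (hu0 : ∀ z, u z ≠ 0) (h : ∀ z, f (z + ω) = u z * f z) :
    Periodic (analyticOrderAt f) ω := fun w => by
  rw [← analyticOrderAt_comp_add_const, show (fun z => f (z + ω)) = u * f from funext h,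
    analyticOrderAt_mul (hu.analyticAt w) (hf.analyticAt w),
    (hu.analyticAt w).analyticOrderAt_eq_zero.mpr (hu0 w), zero_add]

lemma Differentiable.analyticOrderAt_ne_top {f : ℂ → ℂ} (hf : Differentiable ℂ f) (hf0 : f ≠ 0)
    (x : ℂ) : analyticOrderAt f x ≠ ⊤ := fun h =>
  hf0 ((AnalyticOnNhd.analyticOrderAt_eq_top_iff_eq_zero x fun z => hf.analyticAt z).mp h)

lemma Differentiable.eventually_ne_zero_nhdsNE {f : ℂ → ℂ} (hf : Differentiable ℂ f)
    (hf0 : f ≠ 0) (x : ℂ) : ∀ᶠ z in 𝓝[≠] x, f z ≠ 0 :=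
  ((hf.analyticAt x).eventually_eq_zero_or_eventually_ne_zero).resolve_left fun h =>
    hf.analyticOrderAt_ne_top hf0 x (analyticOrderAt_eq_top.mpr h)

lemma Continuous.eq_of_eventuallyEq_nhdsNE {φ ψ : ℂ → ℂ} (hφ : Continuous φ) (hψ : Continuous ψ)
    (h : ∀ x, φ =ᶠ[𝓝[≠] x] ψ) : φ = ψ :=
  funext fun x => ((hφ.continuousAt.eventuallyEq_nhds_iff_eventuallyEq_nhdsNE
    hψ.continuousAt).mp (h x)).eq_of_nhds

lemma Differentiable.mul_right_cancel {φ ψ f : ℂ → ℂ} (hφ : Continuous φ) (hψ : Continuous ψ)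
    (hf : Differentiable ℂ f) (hf0 : f ≠ 0) (h : ∀ z, φ z * f z = ψ z * f z) : φ = ψ :=
  hφ.eq_of_eventuallyEq_nhdsNE hψ fun x => by
    filter_upwards [hf.eventually_ne_zero_nhdsNE hf0 x] with z hz
    exact mul_right_cancel₀ hz (h z)

lemma Differentiable.exists_mul_eq_of_analyticOrderAt_le {f g : ℂ → ℂ} (hf : Differentiable ℂ f)
    (hg : Differentiable ℂ g) (hf0 : f ≠ 0)
    (hle : ∀ z, analyticOrderAt f z ≤ analyticOrderAt g z) :
    ∃ h : ℂ → ℂ, Differentiable ℂ h ∧ g = h * f := by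
  have hmer : MeromorphicOn (g / f) Set.univ := fun z _ =>
    (hg.analyticAt z).meromorphicAt.div (hf.analyticAt z).meromorphicAt
  have hh : Differentiable ℂ (toMeromorphicNFOn (g / f) Set.univ) := fun z => by
    refine ((meromorphicNFOn_toMeromorphicNFOn (g / f) Set.univ (Set.mem_univ z)
      ).meromorphicOrderAt_nonneg_iff_analyticAt.mp ?_).differentiableAt
    rw [meromorphicOrderAt_toMeromorphicNFOn hmer (Set.mem_univ z),
      meromorphicOrderAt_div (hg.analyticAt z).meromorphicAt (hf.analyticAt z).meromorphicAt,
      (hg.analyticAt z).meromorphicOrderAt_eq, (hf.analyticAt z).meromorphicOrderAt_eq]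
    obtain ⟨k, hk⟩ := ENat.ne_top_iff_exists.mp (hf.analyticOrderAt_ne_top hf0 z)
    have hkg : (k : ℕ∞) ≤ analyticOrderAt g z := hk ▸ hle z
    rw [← hk]
    generalize analyticOrderAt g z = a at hkg ⊢
    induction a using ENat.recTopCoe with
    | top => simp
    | coe l =>
      have hkl : (k : ℤ) ≤ l := by exact_mod_cast hkg
      rw [ENat.map_natCast, ENat.map_natCast]
      exact_mod_cast sub_nonneg.mpr hkl
  refine ⟨_, hh, hg.continuous.eq_of_eventuallyEq_nhdsNE (hh.continuous.mul hf.continuous)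
    fun x => ?_⟩
  filter_upwards [hmer.toMeromorphicNFOn_eq_self_on_nhdsNE (Set.mem_univ x),
    hf.eventually_ne_zero_nhdsNE hf0 x] with z hhz hfz
  rw [Pi.mul_apply, hhz, Pi.div_apply, div_mul_cancel₀ _ hfz]

noncomputable def thetaFactor (n : ℕ) (c z : ℂ) : ℂ :=
  (-1 : ℂ) ^ n * exp (-2 * Real.pi * I * (n * z - c))

/-- The functional equations defining `Θ_{n,c}(τ)`; analyticity is assumed separately. -/
def IsThetaFunction (τ : ℂ) (n : ℕ) (c : ℂ) (f : ℂ → ℂ) : Prop :=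
  Periodic f 1 ∧ ∀ z, f (z + τ) = thetaFactor n c z * f z

lemma thetaFactor_ne_zero (n : ℕ) (c z : ℂ) : thetaFactor n c z ≠ 0 :=
  mul_ne_zero (pow_ne_zero _ (by norm_num)) (exp_ne_zero _)

lemma differentiable_thetaFactor (n : ℕ) (c : ℂ) : Differentiable ℂ (thetaFactor n c) := by
  unfold thetaFactor
  fun_prop

lemma thetaFactor_add (n n' : ℕ) (c c' z : ℂ) :
    thetaFactor (n + n') (c + c') z = thetaFactor n c z * thetaFactor n' c' z := by
  simp only [thetaFactor, pow_add]
  rw [mul_mul_mul_comm, ← exp_add]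
  congr 2
  push_cast
  ring

lemma thetaFactor_zero_left (c z : ℂ) : thetaFactor 0 c z = exp (2 * Real.pi * I * c) := by
  simp only [thetaFactor]
  ring_nf

namespace IsThetaFunction

variable {τ c c' : ℂ} {n n' : ℕ} {f g : ℂ → ℂ}

lemma one : IsThetaFunction τ 0 0 1 :=
  ⟨fun _ => rfl, fun z => by simp [thetaFactor_zero_left]⟩

lemma mul (hf : IsThetaFunction τ n c f) (hg : IsThetaFunction τ n' c' g) :
    IsThetaFunction τ (n + n') (c + c') (f * g) :=
  ⟨hf.1.mul hg.1, fun z => by simp only [Pi.mul_apply, hf.2, hg.2, thetaFactor_add]; ring⟩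

lemma pow (hf : IsThetaFunction τ n c f) (k : ℕ) :
    IsThetaFunction τ (k * n) (k * c) (f ^ k) := by
  induction k with
  | zero => simpa using one
  | succ k ih => simpa [pow_succ, add_mul] using ih.mul hf

lemma prod {ι : Type*} (s : Finset ι) {n : ι → ℕ} {c : ι → ℂ} {f : ι → ℂ → ℂ}
    (hf : ∀ i ∈ s, IsThetaFunction τ (n i) (c i) (f i)) :
    IsThetaFunction τ (∑ i ∈ s, n i) (∑ i ∈ s, c i) (∏ i ∈ s, f i) := by
  classical
  induction s using Finset.induction_on with
  | empty => simpa using one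
  | insert i s hi ih =>
    rw [Finset.sum_insert hi, Finset.sum_insert hi, Finset.prod_insert hi]
    exact (hf i (s.mem_insert_self i)).mul (ih fun j hj => hf j (Finset.mem_insert_of_mem hj))

lemma comp_sub (hf : IsThetaFunction τ n c f) (u : ℂ) :
    IsThetaFunction τ n (c + n * u) (fun z => f (z - u)) := by
  refine ⟨fun z => by simpa [sub_add_eq_add_sub] using hf.1 (z - u), fun z => ?_⟩
  change f (z + τ - u) = _ * f (z - u)
  rw [show z + τ - u = z - u + τ by ring, hf.2]
  simp only [thetaFactor]
  congr 3
  ring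

lemma periodic_analyticOrderAt (hθ : IsThetaFunction τ n c f) (hf : Differentiable ℂ f)
    (a b : ℤ) : Periodic (analyticOrderAt f) (a + b * τ) := by
  have h1 := periodic_analyticOrderAt_of_add_eq_mul hf (differentiable_const 1)
    (fun _ => one_ne_zero) (fun z => by rw [hθ.1 z, one_mul])
  have hτ := periodic_analyticOrderAt_of_add_eq_mul hf (differentiable_thetaFactor n c)
    (thetaFactor_ne_zero n c) hθ.2
  simpa using (h1.int_mul a).add_period (hτ.int_mul b)

lemma of_eq_mul {h : ℂ → ℂ} (hf : IsThetaFunction τ n c f) (hg : IsThetaFunction τ n c' g)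
    (hfd : Differentiable ℂ f) (hf0 : f ≠ 0) (hh : Continuous h) (hgh : g = h * f) :
    IsThetaFunction τ 0 (c' - c) h := by
  subst hgh
  have hfac : ∀ w, thetaFactor n c' w = thetaFactor 0 (c' - c) w * thetaFactor n c w := fun w => by
    rw [← thetaFactor_add, zero_add, sub_add_cancel]
  have hA := (differentiable_thetaFactor n c).continuous
  have hA₀ := (differentiable_thetaFactor 0 (c' - c)).continuous
  have h1 := Differentiable.mul_right_cancel (φ := fun z => h (z + 1)) (by fun_prop) hh hfd hf0
    fun z => by simpa [hf.1 z] using hg.1 z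
  have hτ := Differentiable.mul_right_cancel (φ := fun z => h (z + τ) * thetaFactor n c z)
    (ψ := fun z => thetaFactor 0 (c' - c) z * h z * thetaFactor n c z) (by fun_prop)
    (by fun_prop) hfd hf0 fun w => by
      have := hg.2 w
      simp only [Pi.mul_apply, hf.2 w, hfac w] at this
      linear_combination this
  exact ⟨fun z => congrFun h1 z,
    fun z => mul_right_cancel₀ (thetaFactor_ne_zero n c z) (congrFun hτ z)⟩

lemma exists_int_eq_of_degree_zero {ν : ℂ} {h : ℂ → ℂ} (hτ : 0 < τ.im)
    (hθ : IsThetaFunction τ 0 ν h) (hh : Differentiable ℂ h) (hh0 : h ≠ 0) :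
    ∃ a b : ℤ, ν = a + b * τ := by
  -- `β` is chosen so that `|k|` is `τ`-periodic as well as `1`-periodic.
  set β : ℝ := ν.im / τ.im
  set e : ℂ → ℂ := fun z => exp (-2 * Real.pi * I * β * z)
  set k : ℂ → ℂ := fun z => h z * e z
  have he : ∀ z w, e (z + w) = e z * e w := fun z w => by simp only [e, ← exp_add]; ring_nf
  have hk1 : ∀ z, k (z + 1) = k z * e 1 := fun z => by simp only [k, hθ.1 z, he]; ring
  have hkτ : ∀ z, k (z + τ) = k z * (exp (2 * Real.pi * I * ν) * e τ) := fun z => by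
    simp only [k, hθ.2 z, he, thetaFactor_zero_left]; ring
  have hnorm1 : ‖e 1‖ = 1 := by simp [e, norm_exp]
  have hnormτ : ‖exp (2 * Real.pi * I * ν) * e τ‖ = 1 := by
    have hβ : ν.im / τ.im * τ.im = ν.im := div_mul_cancel₀ _ hτ.ne'
    rw [← exp_add, norm_exp, Real.exp_eq_one_iff]
    simp [β, mul_assoc, hβ]
  have hconst := Differentiable.apply_eq_apply_of_periodic_norm hτ (k := k)
    (hh.mul (by fun_prop)) (fun z => by simp only [hk1, norm_mul, hnorm1, mul_one])
    (fun z => by simp only [hkτ, norm_mul _ (_ * _), hnormτ, mul_one])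
  have hk0 : k 0 ≠ 0 := fun hk0 => hh0 <| funext fun z =>
    (mul_eq_zero.mp ((hconst z 0).trans hk0)).resolve_right (exp_ne_zero _)
  have hmul_eq_one : ∀ {ω μ : ℂ}, (∀ z, k (z + ω) = k z * μ) → μ = 1 := fun hω =>
    mul_left_cancel₀ hk0 (by rw [mul_one, ← hω, zero_add, hconst])
  obtain ⟨m, hm⟩ := exp_eq_one_iff.mp (hmul_eq_one hk1)
  have hτmul : exp (2 * Real.pi * I * ν - 2 * Real.pi * I * β * τ) = 1 := by
    rw [← hmul_eq_one hkτ, exp_sub, div_eq_mul_inv, ← exp_neg]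
    simp only [e]
    ring_nf
  obtain ⟨j, hj⟩ := exp_eq_one_iff.mp hτmul
  have h2πI : 2 * Real.pi * I ≠ 0 := by simp [Real.pi_ne_zero]
  refine ⟨j, -m, mul_left_cancel₀ h2πI ?_⟩
  push_cast
  linear_combination hj - τ * hm

end IsThetaFunction

lemma integral_jacobiTheta₂_term (n : ℤ) (τ : ℂ) :
    ∫ t in (0 : ℝ)..1, jacobiTheta₂_term n t τ = if n = 0 then 1 else 0 := by
  split_ifs with hn
  · simp [hn, jacobiTheta₂_term]
  have hc : 2 * Real.pi * I * n ≠ 0 := by simp [Real.pi_ne_zero, hn]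
  have hterm : ∀ t : ℝ, jacobiTheta₂_term n t τ =
      exp (Real.pi * I * n ^ 2 * τ) * exp (2 * Real.pi * I * n * t) := fun t => by
    rw [jacobiTheta₂_term, ← exp_add]
    ring_nf
  simp_rw [hterm, intervalIntegral.integral_const_mul, integral_exp_mul_complex hc]
  have hper : exp (2 * Real.pi * I * n) = 1 := by
    simpa [mul_comm] using exp_int_mul_two_pi_mul_I n
  simp [hper]

lemma integral_jacobiTheta₂ {τ : ℂ} (hτ : 0 < τ.im) :
    ∫ t in (0 : ℝ)..1, jacobiTheta₂ t τ = 1 := by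
  have hnorm : ∀ (n : ℤ) (t : ℝ),
      ‖jacobiTheta₂_term n t τ‖ = Real.exp (-Real.pi * n ^ 2 * τ.im) := fun n t => by
    simp [norm_jacobiTheta₂_term]
  have hsum : Summable fun n : ℤ => ∫ t in Set.Ioc (0 : ℝ) 1, ‖jacobiTheta₂_term n t τ‖ := by
    simpa [hnorm, mul_comm, mul_left_comm] using summable_pow_mul_jacobiTheta₂_term_bound 0 hτ 0
  have hint : ∀ n : ℤ, IntegrableOn (fun t : ℝ => jacobiTheta₂_term n t τ) (Set.Ioc 0 1) :=
    fun n => (by unfold jacobiTheta₂_term; fun_prop : Continuous _).integrableOn_Ioc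
  calc ∫ t in (0 : ℝ)..1, jacobiTheta₂ t τ
      = ∑' n : ℤ, ∫ t in (0 : ℝ)..1, jacobiTheta₂_term n t τ := by
        simp only [intervalIntegral.integral_of_le zero_le_one, jacobiTheta₂]
        exact (integral_tsum_of_summable_integral_norm hint hsum).symm
    _ = 1 := by simp [integral_jacobiTheta₂_term]

lemma exists_jacobiTheta₂_ne_zero {τ : ℂ} (hτ : 0 < τ.im) : ∃ z, jacobiTheta₂ z τ ≠ 0 := by
  by_contra! h
  simpa [h] using integral_jacobiTheta₂ hτ

/-- The shift moves the zero `(1 + τ) / 2` of `jacobiTheta₂ · τ` to a lattice point. -/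
noncomputable def shiftedJacobiTheta (τ z : ℂ) : ℂ := jacobiTheta₂ (z + (1 - τ) / 2) τ

lemma isThetaFunction_shiftedJacobiTheta (τ : ℂ) :
    IsThetaFunction τ 1 0 (shiftedJacobiTheta τ) := by
  refine ⟨fun z => by simp only [shiftedJacobiTheta, add_right_comm z 1, jacobiTheta₂_add_left],
    fun z => ?_⟩
  simp only [shiftedJacobiTheta, thetaFactor]
  rw [add_right_comm, jacobiTheta₂_add_left',
    show -Real.pi * I * (τ + 2 * (z + (1 - τ) / 2)) =
      -2 * Real.pi * I * (1 * z - 0) + -(Real.pi * I) by ring,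
    exp_add, exp_neg, exp_pi_mul_I]
  norm_num

lemma shiftedJacobiTheta_zero (τ : ℂ) : shiftedJacobiTheta τ 0 = 0 := by
  have hshift := (isThetaFunction_shiftedJacobiTheta τ).2 0
  have hsymm : shiftedJacobiTheta τ (0 + τ) = shiftedJacobiTheta τ 0 := by
    simp only [shiftedJacobiTheta]
    rw [show 0 + τ + (1 - τ) / 2 = -(0 + (1 - τ) / 2) + 1 by ring, jacobiTheta₂_add_left,
      jacobiTheta₂_neg_left]
  have hfactor : thetaFactor 1 0 0 = -1 := by simp [thetaFactor]
  rw [hsymm, hfactor] at hshift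
  linear_combination hshift / 2

lemma differentiable_shiftedJacobiTheta {τ : ℂ} (hτ : 0 < τ.im) :
    Differentiable ℂ (shiftedJacobiTheta τ) := fun z =>
  (differentiableAt_jacobiTheta₂_fst _ hτ).comp z (by fun_prop)

lemma shiftedJacobiTheta_ne_zero {τ : ℂ} (hτ : 0 < τ.im) : shiftedJacobiTheta τ ≠ 0 := fun h => by
  obtain ⟨z, hz⟩ := exists_jacobiTheta₂_ne_zero hτ
  exact hz (by simpa [shiftedJacobiTheta] using congrFun h (z - (1 - τ) / 2))

noncomputable def thetaProduct (τ : ℂ) (Z : Finset ℂ) (m : ℂ → ℕ) : ℂ → ℂ :=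
  ∏ u ∈ Z, (fun z => shiftedJacobiTheta τ (z - u)) ^ m u

section thetaProduct

variable {τ : ℂ} (Z : Finset ℂ) (m : ℂ → ℕ)

lemma isThetaFunction_thetaProduct :
    IsThetaFunction τ (∑ u ∈ Z, m u) (∑ u ∈ Z, m u * u) (thetaProduct τ Z m) := by
  simpa [thetaProduct] using IsThetaFunction.prod Z fun u _ =>
    ((isThetaFunction_shiftedJacobiTheta τ).comp_sub u).pow (m u)

lemma differentiable_thetaProduct (hτ : 0 < τ.im) : Differentiable ℂ (thetaProduct τ Z m) :=
  Differentiable.finsetProd fun u _ =>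
    ((differentiable_shiftedJacobiTheta hτ).comp (differentiable_id.sub_const u)).pow (m u)

lemma analyticOrderAt_thetaProduct (hτ : 0 < τ.im) (w : ℂ) :
    analyticOrderAt (thetaProduct τ Z m) w =
      ∑ u ∈ Z, m u • analyticOrderAt (shiftedJacobiTheta τ) (w - u) := by
  have hd : ∀ u, Differentiable ℂ fun z => shiftedJacobiTheta τ (z - u) := fun u =>
    (differentiable_shiftedJacobiTheta hτ).comp (differentiable_id.sub_const u)
  rw [thetaProduct, analyticOrderAt_finset_prod Z fun u _ => ((hd u).pow (m u)).analyticAt w]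
  refine Finset.sum_congr rfl fun u _ => ?_
  rw [analyticOrderAt_pow ((hd u).analyticAt w), sub_eq_add_neg, ← analyticOrderAt_comp_add_const]
  rfl

lemma thetaProduct_ne_zero (hτ : 0 < τ.im) : thetaProduct τ Z m ≠ 0 := fun h0 => by
  have htop : analyticOrderAt (thetaProduct τ Z m) 0 = ⊤ := by
    rw [h0]
    exact analyticOrderAt_eq_top.mpr (by simp)
  refine ENat.sum_ne_top.mpr (fun u _ => ?_)
    ((analyticOrderAt_thetaProduct Z m hτ 0).symm.trans htop)
  obtain ⟨k, hk⟩ := ENat.ne_top_iff_exists.mp ((differentiable_shiftedJacobiTheta hτ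
    ).analyticOrderAt_ne_top (shiftedJacobiTheta_ne_zero hτ) (0 - u))
  rw [← hk]
  exact ENat.natCast_ne_top (m u * k)

end thetaProduct

lemma analyticOrderAt_le_thetaProduct {τ c z₀ : ℂ} {n : ℕ} {f : ℂ → ℂ} (hτ : 0 < τ.im)
    (hθ : IsThetaFunction τ n c f) (hf : Differentiable ℂ f) (hf0 : f ≠ 0) {Z : Finset ℂ}
    (hZ : ↑Z = {z ∈ fundPar τ z₀ | f z = 0}) (w : ℂ) :
    analyticOrderAt f w ≤
      analyticOrderAt (thetaProduct τ Z fun u => (analyticOrderAt f u).toNat) w := by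
  obtain ⟨u, hu, a, b, rfl⟩ := exists_mem_fundPar_add hτ z₀ w
  rw [hθ.periodic_analyticOrderAt hf a b u, analyticOrderAt_thetaProduct _ _ hτ]
  by_cases hfu : f u = 0
  swap
  · rw [(hf.analyticAt u).analyticOrderAt_eq_zero.mpr hfu]
    exact zero_le
  have huZ : u ∈ Z := by
    rw [← Finset.mem_coe, hZ]
    exact ⟨hu, hfu⟩
  have hϑ := differentiable_shiftedJacobiTheta hτ
  have hϑ1 : 1 ≤ analyticOrderAt (shiftedJacobiTheta τ) (u + (a + b * τ) - u) := by
    rw [add_sub_cancel_left, ← zero_add (a + b * τ : ℂ),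
      (isThetaFunction_shiftedJacobiTheta τ).periodic_analyticOrderAt hϑ a b]
    exact Order.one_le_iff_ne_zero.mpr
      ((hϑ.analyticAt 0).analyticOrderAt_ne_zero.mpr (shiftedJacobiTheta_zero τ))
  calc analyticOrderAt f u = (analyticOrderAt f u).toNat • 1 := by
        simp [ENat.natCast_toNat (hf.analyticOrderAt_ne_top hf0 u)]
    _ ≤ (analyticOrderAt f u).toNat •
          analyticOrderAt (shiftedJacobiTheta τ) (u + (a + b * τ) - u) :=
        nsmul_le_nsmul_right hϑ1 _
    _ ≤ _ := Finset.single_le_sum (f := fun v => (analyticOrderAt f v).toNat •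
          analyticOrderAt (shiftedJacobiTheta τ) (u + (a + b * τ) - v)) (fun _ _ => zero_le) huZ

theorem stmt_6_general (τ : ℂ) (hτ : 0 < τ.im) (n : ℕ) (c : ℂ)
    (f : ℂ → ℂ) (hf : ∀ z, AnalyticAt ℂ f z)
    (hper1 : ∀ z, f (z + 1) = f z)
    (hperτ : ∀ z, f (z + τ) =
      (-1 : ℂ) ^ n * Complex.exp (-2 * Real.pi * Complex.I * (n * z - c)) * f z)
    (hne : f ≠ 0)
    (z₀ : ℂ)
    (Z : Finset ℂ) (hZ : ↑Z = {z ∈ fundPar τ z₀ | f z = 0})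
    (hcount : ∑ z ∈ Z, (analyticOrderAt f z).toNat = n) :
    ∃ a b : ℤ, ∑ z ∈ Z, ((analyticOrderAt f z).toNat : ℂ) * z = c + a + b * τ := by
  have hfd : Differentiable ℂ f := fun z => (hf z).differentiableAt
  have hθf : IsThetaFunction τ n c f := ⟨hper1, hperτ⟩
  set m : ℂ → ℕ := fun u => (analyticOrderAt f u).toNat
  have hθG := isThetaFunction_thetaProduct (τ := τ) Z m
  rw [hcount] at hθG
  obtain ⟨h, hhd, hGh⟩ := hfd.exists_mul_eq_of_analyticOrderAt_le
    (differentiable_thetaProduct Z m hτ) hne (analyticOrderAt_le_thetaProduct hτ hθf hfd hne hZ)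
  have hh0 : h ≠ 0 := fun h0 => thetaProduct_ne_zero Z m hτ (by simp [hGh, h0])
  obtain ⟨a, b, hab⟩ :=
    (hθf.of_eq_mul hθG hfd hne hhd.continuous hGh).exists_int_eq_of_degree_zero hτ hhd hh0
  exact ⟨a, b, by linear_combination hab⟩

/-- For `f ∈ Θ_{n,c}(τ)`, not identically zero, the sum of the zeros of `f` in a fundamental
parallelogram (whose boundary avoids zeros of `f`), counted with multiplicity, is congruent
to `c` modulo the lattice `ℤ + ℤτ`. -/
theorem stmt_6 (τ : ℂ) (hτ : 0 < τ.im) (n : ℕ) (hn : 1 ≤ n) (c : ℂ)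
    (f : ℂ → ℂ) (hf : ∀ z, AnalyticAt ℂ f z)
    (hper1 : ∀ z, f (z + 1) = f z)
    (hperτ : ∀ z, f (z + τ) =
      (-1 : ℂ) ^ n * Complex.exp (-2 * Real.pi * Complex.I * (n * z - c)) * f z)
    (hne : f ≠ 0)
    (z₀ : ℂ)
    (hbd : ∀ s t : ℝ, s ∈ Set.Icc (0:ℝ) 1 → t ∈ Set.Icc (0:ℝ) 1 →
      (s = 0 ∨ s = 1 ∨ t = 0 ∨ t = 1) → f (z₀ + s + t * τ) ≠ 0)
    (Z : Finset ℂ) (hZ : ↑Z = {z ∈ fundPar τ z₀ | f z = 0})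
    (hcount : ∑ z ∈ Z, (analyticOrderAt f z).toNat = n) :
    ∃ a b : ℤ, ∑ z ∈ Z, ((analyticOrderAt f z).toNat : ℂ) * z = c + a + b * τ :=
  stmt_6_general τ hτ n c f hf hper1 hperτ hne z₀ Z hZ hcount
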